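/- Let F satisfy Assumption 2 and a > 0, and let b_F and g be the unique constant and the unique differentiable solution on ℝ of g'(x) = a·x² − b_F − F(g(x)) with x·g(x) ≤ 0 for all x ∈ ℝ. Then g is odd (g(−x) = −g(x) for all x), g is decreasing on ℝ, and g satisfies the growth conditions lim_{x→−∞} g(x)/F⁻¹(a·x²) = 1 and lim_{x→+∞} g(x)/F⁻¹(a·x²) = −1. -/

import Mathlib

/-- Assumption 2 on the function `F`. -/
structure Assumption2 (F : ℝ → ℝ) : Prop where
  convex : ConvexOn ℝ Set.univ F
  diff : Differentiable ℝ F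
  even : ∀ x : ℝ, F (-x) = F x
  strictMonoOn : StrictMonoOn F (Set.Ici 0)
  map_zero : F 0 = 0
  deriv_diffOn : ∀ x ∈ Set.Ici (0 : ℝ), DifferentiableAt ℝ (deriv F) x
  deriv_strictMonoOn : StrictMonoOn (deriv F) (Set.Ici 0)
  deriv_zero : deriv F 0 = 0
  growth : ∃ K > (0 : ℝ), ∃ p : ℝ, 2 ≤ p ∧ ∀ x : ℝ, F x ≤ K * (1 + |x| ^ p)
  second_deriv_lb : ∃ C > (0 : ℝ), ∃ x₀ > (0 : ℝ), ∀ x : ℝ, x₀ < |x| → C < deriv (deriv F) x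

/-- `Finv` is the inverse of the restriction of `F` to `[0, ∞)`
(a strictly increasing bijection of `[0, ∞)` onto itself). -/
def IsInvOn (F Finv : ℝ → ℝ) : Prop :=
  (∀ x : ℝ, 0 ≤ x → Finv (F x) = x) ∧ ∀ y : ℝ, 0 ≤ y → 0 ≤ Finv y ∧ F (Finv y) = y


/-!
Since `x * g x ≤ 0`, `g 0 = 0`; as `x ↦ -g (-x)` solves the same equation (`F` is even) with the
same value at `0`, and the convex function `F` is locally Lipschitz, `g` is odd by uniqueness.

If `g' x₀ = c > 0` for some `x₀ ≥ 0`, then wherever `g' = c / 2` on `(0, ∞)` we have `g ≤ 0`,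
hence `F'(g) ≤ 0` and `g'' = 2 a x - F'(g) g' > 0`; so `g'` never drops below `c / 2`, and `g`
eventually becomes positive, against the sign condition. Thus `g' ≤ 0`, i.e.
`F (-g x) ≥ a x² - b_F`, and `-g x ≥ F⁻¹(a x²) - F⁻¹(b_F)`.

Conversely, `F` grows at least quadratically (`F y ≥ κ y²` for large `y`, from `F'' > C`). If
`F (-g x₁) > (1 + ε) a x₁²` at some large `x₁`, then on `[x₁, (1 + ε / 8) x₁]` the function
`u = -g` satisfies `u' = F u + b_F - a x² ≥ (ε / 4) F u ≥ (ε κ / 4) u²`, and such a `u` blows up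
within that interval. Hence eventually `-g x ≤ F⁻¹((1 + ε) a x²) ≤ (1 + ε) F⁻¹(a x²)`, the last
step (like the subadditivity of `F⁻¹` used above) coming from the convexity of `F` and `F 0 = 0`.
-/

open Set Filter Topology

section ConvexOn

variable {f : ℝ → ℝ}

theorem ConvexOn.map_mul_le_of_map_zero (hf : ConvexOn ℝ (Ici 0) f) (h0 : f 0 = 0) {t x : ℝ}
    (ht₀ : 0 ≤ t) (ht₁ : t ≤ 1) (hx : 0 ≤ x) : f (t * x) ≤ t * f x := by
  simpa [h0] using hf.2 (mem_Ici.2 hx) self_mem_Ici ht₀ (sub_nonneg.2 ht₁) (add_sub_cancel t 1)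

theorem ConvexOn.add_le_map_add_of_map_zero (hf : ConvexOn ℝ (Ici 0) f) (h0 : f 0 = 0)
    {s t : ℝ} (hs : 0 ≤ s) (ht : 0 ≤ t) : f s + f t ≤ f (s + t) := by
  rcases (add_nonneg hs ht).eq_or_lt with hst | hst
  · obtain ⟨rfl, rfl⟩ : s = 0 ∧ t = 0 := ⟨by linarith, by linarith⟩
    simp [h0]
  have hs' := hf.map_mul_le_of_map_zero h0 (div_nonneg hs hst.le)
    ((div_le_one hst).2 (by linarith)) hst.le
  have ht' := hf.map_mul_le_of_map_zero h0 (div_nonneg ht hst.le)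
    ((div_le_one hst).2 (by linarith)) hst.le
  rw [div_mul_cancel₀ _ hst.ne'] at hs' ht'
  calc f s + f t ≤ s / (s + t) * f (s + t) + t / (s + t) * f (s + t) := add_le_add hs' ht'
    _ = f (s + t) := by field_simp

theorem ConvexOn.mul_le_map_mul_of_map_zero (hf : ConvexOn ℝ (Ici 0) f) (h0 : f 0 = 0)
    {l y : ℝ} (hl : 1 ≤ l) (hy : 0 ≤ y) : l * f y ≤ f (l * y) := by
  have hl₀ : 0 < l := one_pos.trans_le hl
  have h := hf.map_mul_le_of_map_zero h0 (inv_nonneg.2 hl₀.le) (inv_le_one_of_one_le₀ hl)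
    (mul_nonneg hl₀.le hy)
  rw [inv_mul_cancel_left₀ hl₀.ne'] at h
  calc l * f y ≤ l * (l⁻¹ * f (l * y)) := mul_le_mul_of_nonneg_left h hl₀.le
    _ = f (l * y) := mul_inv_cancel_left₀ hl₀.ne' _

end ConvexOn

namespace IsInvOn

variable {F Finv : ℝ → ℝ}

theorem le_of_le_apply (hF : StrictMonoOn F (Ici 0)) (hInv : IsInvOn F Finv) {t u : ℝ}
    (ht : 0 ≤ t) (hu : 0 ≤ u) (h : t ≤ F u) : Finv t ≤ u := by
  obtain ⟨hpos, hFt⟩ := hInv.2 t ht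
  exact (hF.le_iff_le hpos hu).1 (by rwa [hFt])

theorem le_of_apply_le (hF : StrictMonoOn F (Ici 0)) (hInv : IsInvOn F Finv) {t u : ℝ}
    (ht : 0 ≤ t) (hu : 0 ≤ u) (h : F u ≤ t) : u ≤ Finv t := by
  obtain ⟨hpos, hFt⟩ := hInv.2 t ht
  exact (hF.le_iff_le hu hpos).1 (by rwa [hFt])

theorem tendsto_atTop (hF : StrictMonoOn F (Ici 0)) (hInv : IsInvOn F Finv) :
    Tendsto Finv atTop atTop :=
  tendsto_atTop_atTop.2 fun b => ⟨max (F (max b 0)) 0, fun _ hz =>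
    (le_max_left b 0).trans <| hInv.le_of_apply_le hF ((le_max_right _ _).trans hz)
      (le_max_right b 0) ((le_max_left _ _).trans hz)⟩

theorem map_add_le_add (hF : StrictMonoOn F (Ici 0)) (hconv : ConvexOn ℝ (Ici 0) F) (h0 : F 0 = 0)
    (hInv : IsInvOn F Finv) {z w : ℝ} (hz : 0 ≤ z) (hw : 0 ≤ w) :
    Finv (z + w) ≤ Finv z + Finv w := by
  obtain ⟨hz₀, hFz⟩ := hInv.2 z hz
  obtain ⟨hw₀, hFw⟩ := hInv.2 w hw
  refine hInv.le_of_le_apply hF (add_nonneg hz hw) (add_nonneg hz₀ hw₀) ?_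
  calc z + w = F (Finv z) + F (Finv w) := by rw [hFz, hFw]
    _ ≤ F (Finv z + Finv w) := hconv.add_le_map_add_of_map_zero h0 hz₀ hw₀

theorem map_mul_le_mul (hF : StrictMonoOn F (Ici 0)) (hconv : ConvexOn ℝ (Ici 0) F) (h0 : F 0 = 0)
    (hInv : IsInvOn F Finv) {l z : ℝ} (hl : 1 ≤ l) (hz : 0 ≤ z) :
    Finv (l * z) ≤ l * Finv z := by
  obtain ⟨hz₀, hFz⟩ := hInv.2 z hz
  have hl₀ : 0 ≤ l := zero_le_one.trans hl
  refine hInv.le_of_le_apply hF (mul_nonneg hl₀ hz) (mul_nonneg hl₀ hz₀) ?_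
  calc l * z = l * F (Finv z) := by rw [hFz]
    _ ≤ F (l * Finv z) := hconv.mul_le_map_mul_of_map_zero h0 hl hz₀

end IsInvOn

namespace Assumption2

variable {F : ℝ → ℝ}

theorem convexOn_Ici (hF : Assumption2 F) : ConvexOn ℝ (Ici 0) F :=
  hF.convex.subset (subset_univ _) (convex_Ici 0)

theorem nonneg_of_nonneg (hF : Assumption2 F) {x : ℝ} (hx : 0 ≤ x) : 0 ≤ F x :=
  hF.map_zero ▸ hF.strictMonoOn.monotoneOn self_mem_Ici hx hx

theorem deriv_nonneg (hF : Assumption2 F) {x : ℝ} (hx : 0 ≤ x) : 0 ≤ deriv F x :=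
  hF.deriv_zero ▸ hF.convex.monotoneOn_deriv (fun y _ => hF.diff y) (mem_univ 0) (mem_univ x) hx

theorem deriv_nonpos (hF : Assumption2 F) {x : ℝ} (hx : x ≤ 0) : deriv F x ≤ 0 :=
  hF.deriv_zero ▸ hF.convex.monotoneOn_deriv (fun y _ => hF.diff y) (mem_univ x) (mem_univ 0) hx

theorem exists_mul_sq_le (hF : Assumption2 F) : ∃ κ > 0, ∃ R, ∀ y, R ≤ y → κ * y ^ 2 ≤ F y := by
  obtain ⟨C, hC, x₀, hx₀, hF''⟩ := hF.second_deriv_lb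
  have hF' : ∀ y, x₀ ≤ y → C * (y - x₀) ≤ deriv F y := by
    intro y hy
    have hmvt := (convex_Ici x₀).mul_sub_le_image_sub_of_le_deriv
      (fun x hx => (hF.deriv_diffOn x (hx₀.le.trans hx)).continuousAt.continuousWithinAt)
      (fun x hx => (hF.deriv_diffOn x (hx₀.le.trans (interior_subset hx))).differentiableWithinAt)
      (fun x hx => (hF'' x (by rw [interior_Ici] at hx; rwa [abs_of_pos (hx₀.trans hx)])).le)
      x₀ self_mem_Ici y hy hy
    linarith [hF.deriv_nonneg hx₀.le]
  refine ⟨C / 8, by positivity, 4 * x₀, fun y hy => ?_⟩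
  have hy₀ : 0 < y := by linarith
  have htangent := hF.convex.deriv_le_slope (mem_univ (y / 2)) (mem_univ y) (by linarith)
    (hF.diff (y / 2))
  rw [slope_def_field, le_div_iff₀ (by linarith)] at htangent
  have hslope : C * (y / 4) ≤ deriv F (y / 2) :=
    le_trans (by gcongr; linarith) (hF' (y / 2) (by linarith))
  calc C / 8 * y ^ 2 = C * (y / 4) * (y - y / 2) := by ring
    _ ≤ deriv F (y / 2) * (y - y / 2) := by gcongr; linarith
    _ ≤ F y := by linarith [hF.nonneg_of_nonneg (x := y / 2) (by linarith)]

end Assumption2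

theorem mul_sub_lt_inv_of_mul_sq_le_deriv {u u' : ℝ → ℝ} {k a b : ℝ} (hab : a ≤ b)
    (hpos : ∀ x ∈ Icc a b, 0 < u x) (hu : ∀ x ∈ Icc a b, HasDerivAt u (u' x) x)
    (hk : ∀ x ∈ Icc a b, k * u x ^ 2 ≤ u' x) : k * (b - a) < (u a)⁻¹ := by
  have hinv : ∀ x ∈ Icc a b, HasDerivAt (fun x => (u x)⁻¹) (-u' x / u x ^ 2) x :=
    fun x hx => (hu x hx).inv (hpos x hx).ne'
  have hdecr := (convex_Icc a b).image_sub_le_mul_sub_of_deriv_le (C := -k)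
    (fun x hx => (hinv x hx).continuousAt.continuousWithinAt)
    (fun x hx => (hinv x (interior_subset hx)).differentiableAt.differentiableWithinAt)
    (fun x hx => by
      have hx' := interior_subset hx
      rw [(hinv x hx').deriv, neg_div, neg_le_neg_iff, le_div_iff₀ (pow_pos (hpos x hx') 2)]
      exact hk x hx')
    a (left_mem_Icc.2 hab) b (right_mem_Icc.2 hab) hab
  have := inv_pos.2 (hpos b (right_mem_Icc.2 hab))
  linarith

structure IsSignedSolution (F : ℝ → ℝ) (a bF : ℝ) (g : ℝ → ℝ) : Prop where
  differentiable : Differentiable ℝ g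
  deriv_eq : ∀ x, deriv g x = a * x ^ 2 - bF - F (g x)
  mul_nonpos : ∀ x, x * g x ≤ 0

namespace IsSignedSolution

variable {F Finv : ℝ → ℝ} {a bF : ℝ} {g : ℝ → ℝ}

theorem nonpos_of_pos (hsol : IsSignedSolution F a bF g) {x : ℝ} (hx : 0 < x) : g x ≤ 0 :=
  nonpos_of_mul_nonpos_right (hsol.mul_nonpos x) hx

theorem map_zero (hsol : IsSignedSolution F a bF g) : g 0 = 0 := by
  have hmax : IsLocalMax (fun x => x * g x) 0 :=
    Eventually.of_forall fun x => by simpa using hsol.mul_nonpos x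
  simpa using hmax.hasDerivAt_eq_zero ((hasDerivAt_id 0).mul (hsol.differentiable 0).hasDerivAt)

theorem hasDerivAt (hsol : IsSignedSolution F a bF g) (x : ℝ) :
    HasDerivAt g (a * x ^ 2 - bF - F (g x)) x :=
  hsol.deriv_eq x ▸ (hsol.differentiable x).hasDerivAt

theorem odd (hF : Assumption2 F) (hsol : IsSignedSolution F a bF g) (x : ℝ) :
    g (-x) = -g x := by
  have hrefl : ∀ t, HasDerivAt (fun s => -g (-s)) (a * t ^ 2 - bF - F (-g (-t))) t := by
    intro t
    refine ((hsol.hasDerivAt (-t)).comp t (hasDerivAt_neg t)).neg.congr_deriv ?_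
    rw [← hF.even (-g (-t)), neg_neg]
    ring
  obtain ⟨T, hT, hxT⟩ : ∃ T, 0 < T ∧ |x| < T := ⟨|x| + 1, by positivity, by linarith⟩
  obtain ⟨R, hR⟩ := isCompact_Icc.exists_bound_of_continuousOn
    (s := Icc (-T) T) hsol.differentiable.continuous.continuousOn
  obtain ⟨K, hK⟩ := (hF.convex.locallyLipschitz.locallyLipschitzOn
    (s := Metric.closedBall 0 R)).exists_lipschitzOnWith_of_compact (isCompact_closedBall 0 R)
  have hball : ∀ t ∈ Ioo (-T) T, g t ∈ Metric.closedBall 0 R ∧ -g (-t) ∈ Metric.closedBall 0 R :=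
    fun t ht => ⟨mem_closedBall_zero_iff.2 (hR t (Ioo_subset_Icc_self ht)),
      mem_closedBall_zero_iff.2 (by
        rw [norm_neg]; exact hR (-t) ⟨by linarith [ht.2], by linarith [ht.1]⟩)⟩
  have heq := ODE_solution_unique_of_mem_Icc (v := fun t y => a * t ^ 2 - bF - F y) (t₀ := 0)
    (fun t _ => LipschitzOnWith.of_dist_le_mul fun y hy z hz => by
      rw [dist_sub_left]; exact hK.dist_le_mul y hy z hz)
    ⟨neg_lt_zero.2 hT, hT⟩ hsol.differentiable.continuous.continuousOn
    (fun t _ => hsol.hasDerivAt t) (fun t ht => (hball t ht).1)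
    (hsol.differentiable.continuous.comp continuous_neg).neg.continuousOn
    (fun t _ => hrefl t) (fun t ht => (hball t ht).2) (by simp [hsol.map_zero])
    (x := x) ⟨by linarith [neg_abs_le x], by linarith [le_abs_self x]⟩
  simp only [Function.comp_apply, Pi.neg_apply] at heq
  linarith

theorem hasDerivAt_deriv (hF : Assumption2 F) (hsol : IsSignedSolution F a bF g) (x : ℝ) :
    HasDerivAt (deriv g) (2 * a * x - deriv F (g x) * deriv g x) x := by
  rw [funext hsol.deriv_eq]
  refine ((((hasDerivAt_pow 2 x).const_mul a).sub_const bF).sub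
    ((hF.diff (g x)).hasDerivAt.comp x (hsol.differentiable x).hasDerivAt)).congr_deriv ?_
  rw [hsol.deriv_eq]
  ring

theorem deriv_nonpos_of_nonneg (hF : Assumption2 F) (ha : 0 < a)
    (hsol : IsSignedSolution F a bF g) {x₀ : ℝ} (hx₀ : 0 ≤ x₀) : deriv g x₀ ≤ 0 := by
  by_contra! hc
  set c := deriv g x₀
  have hstay : ∀ x, x₀ ≤ x → c / 2 ≤ deriv g x := by
    intro x hx
    refine image_le_of_deriv_right_lt_deriv_boundary (f := fun _ => c / 2) (f' := fun _ => 0)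
      continuousOn_const (fun _ _ => hasDerivWithinAt_const _ _ _) (by linarith)
      (hsol.hasDerivAt_deriv hF) ?_ ⟨hx, le_rfl⟩
    intro y hy hyc
    have hyx₀ : y ≠ x₀ := by
      rintro rfl
      linarith
    have hy₀ : 0 < y := hx₀.trans_lt (lt_of_le_of_ne hy.1 hyx₀.symm)
    have hF' := hF.deriv_nonpos (hsol.nonpos_of_pos hy₀)
    rw [← hyc]
    nlinarith
  have hgrow := (convex_Ici x₀).mul_sub_le_image_sub_of_le_deriv
    hsol.differentiable.continuous.continuousOn hsol.differentiable.differentiableOn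
    (fun x hx => hstay x (interior_subset hx))
  set x₁ := x₀ + 2 * (|g x₀| + 1) / c
  have hx₁ : x₀ < x₁ := lt_add_of_pos_right x₀ (by positivity)
  have hlin : c / 2 * (x₁ - x₀) = |g x₀| + 1 := by
    simp only [x₁]
    field_simp
    ring
  have h := hgrow x₀ self_mem_Ici x₁ hx₁.le hx₁.le
  linarith [neg_abs_le (g x₀), hsol.nonpos_of_pos (hx₀.trans_lt hx₁)]

theorem deriv_nonpos (hF : Assumption2 F) (ha : 0 < a) (hsol : IsSignedSolution F a bF g)
    (x : ℝ) : deriv g x ≤ 0 := by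
  rcases le_total 0 x with hx | hx
  · exact hsol.deriv_nonpos_of_nonneg hF ha hx
  · have h := hsol.deriv_nonpos_of_nonneg hF ha (neg_nonneg.2 hx)
    rwa [hsol.deriv_eq, hsol.odd hF, hF.even, neg_sq, ← hsol.deriv_eq] at h

theorem antitone (hF : Assumption2 F) (ha : 0 < a) (hsol : IsSignedSolution F a bF g) :
    Antitone g :=
  antitone_of_deriv_nonpos hsol.differentiable (hsol.deriv_nonpos hF ha)

theorem bF_nonneg (hF : Assumption2 F) (ha : 0 < a) (hsol : IsSignedSolution F a bF g) :
    0 ≤ bF := by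
  have h := hsol.deriv_nonpos_of_nonneg hF ha le_rfl
  rw [hsol.deriv_eq, hsol.map_zero, hF.map_zero] at h
  linarith

theorem sub_le_map_neg (hF : Assumption2 F) (ha : 0 < a) (hsol : IsSignedSolution F a bF g)
    (x : ℝ) : a * x ^ 2 - bF ≤ F (-g x) := by
  have h := hsol.deriv_nonpos hF ha x
  rw [hsol.deriv_eq] at h
  rw [hF.even]
  linarith

theorem neg_nonneg_of_nonneg (hsol : IsSignedSolution F a bF g) {x : ℝ} (hx : 0 ≤ x) :
    0 ≤ -g x := by
  rcases hx.eq_or_lt with rfl | hx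
  · simp [hsol.map_zero]
  · linarith [hsol.nonpos_of_pos hx]

theorem finv_sub_le_neg (hF : Assumption2 F) (hInv : IsInvOn F Finv) (ha : 0 < a)
    (hsol : IsSignedSolution F a bF g) {x : ℝ} (hx : 0 ≤ x) (hbx : bF ≤ a * x ^ 2) :
    Finv (a * x ^ 2 - bF) ≤ -g x :=
  hInv.le_of_le_apply hF.strictMonoOn (sub_nonneg.2 hbx) (hsol.neg_nonneg_of_nonneg hx)
    (hsol.sub_le_map_neg hF ha x)

theorem tendsto_neg_atTop (hF : Assumption2 F) (hInv : IsInvOn F Finv) (ha : 0 < a)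
    (hsol : IsSignedSolution F a bF g) : Tendsto (fun x => -g x) atTop atTop := by
  have hq : Tendsto (fun x : ℝ => a * x ^ 2 - bF) atTop atTop :=
    tendsto_atTop_add_const_right _ _ ((tendsto_pow_atTop two_ne_zero).const_mul_atTop ha)
  refine tendsto_atTop_mono' _ ?_ ((hInv.tendsto_atTop hF.strictMonoOn).comp hq)
  filter_upwards [eventually_ge_atTop 0, hq.eventually_ge_atTop 0] with x hx hbx
  exact hsol.finv_sub_le_neg hF hInv ha hx (sub_nonneg.1 hbx)

theorem mul_map_neg_le_neg_deriv (hF : Assumption2 F) (ha : 0 < a)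
    (hsol : IsSignedSolution F a bF g) {ε x₁ x : ℝ} (hε₀ : 0 < ε) (hε₁ : ε ≤ 1) (hx₁ : 0 ≤ x₁)
    (hx : x ∈ Icc x₁ ((1 + ε / 8) * x₁)) (hu₁ : 0 ≤ -g x₁)
    (hblow : (1 + ε) * (a * x₁ ^ 2) < F (-g x₁)) : ε / 4 * F (-g x) ≤ -deriv g x := by
  have hmono : -g x₁ ≤ -g x := neg_le_neg (hsol.antitone hF ha hx.1)
  have hFu : F (-g x₁) ≤ F (-g x) := hF.strictMonoOn.monotoneOn hu₁ (hu₁.trans hmono) hmono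
  have hxsq : x ^ 2 ≤ (1 + 3 * ε / 8) * x₁ ^ 2 := calc
    x ^ 2 ≤ ((1 + ε / 8) * x₁) ^ 2 := pow_le_pow_left₀ (hx₁.trans hx.1) hx.2 2
    _ ≤ (1 + 3 * ε / 8) * x₁ ^ 2 := by
      nlinarith [mul_nonneg (mul_nonneg hε₀.le (by linarith : 0 ≤ 8 - ε)) (sq_nonneg x₁)]
  have hax : a * x ^ 2 ≤ (1 - ε / 4) * F (-g x) := calc
    a * x ^ 2 ≤ (1 + 3 * ε / 8) * (a * x₁ ^ 2) := by nlinarith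
    _ ≤ (1 - ε / 4) * ((1 + ε) * (a * x₁ ^ 2)) := by
      nlinarith [mul_nonneg (mul_nonneg hε₀.le (by linarith : 0 ≤ 3 - 2 * ε)) ha.le,
        sq_nonneg x₁]
    _ ≤ (1 - ε / 4) * F (-g x) := by
      gcongr
      · linarith
      · exact hblow.le.trans hFu
  linarith [hsol.deriv_eq x, hF.even (g x), hsol.bF_nonneg hF ha]

theorem eventually_map_neg_le (hF : Assumption2 F) (hInv : IsInvOn F Finv) (ha : 0 < a)
    (hsol : IsSignedSolution F a bF g) {ε : ℝ} (hε₀ : 0 < ε) (hε₁ : ε ≤ 1) :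
    ∀ᶠ x in atTop, F (-g x) ≤ (1 + ε) * (a * x ^ 2) := by
  obtain ⟨κ, hκ, R, hR⟩ := hF.exists_mul_sq_le
  filter_upwards [eventually_ge_atTop 1, (hsol.tendsto_neg_atTop hF hInv ha).eventually_ge_atTop
    (max R (32 / (ε ^ 2 * κ)))] with x₁ hx₁ hu₁
  by_contra! hblow
  have hu₁R : R ≤ -g x₁ := (le_max_left _ _).trans hu₁
  have hu₁big : 32 / (ε ^ 2 * κ) ≤ -g x₁ := (le_max_right _ _).trans hu₁
  have hu₁pos : 0 < -g x₁ := lt_of_lt_of_le (by positivity) hu₁big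
  have hmono : ∀ x ∈ Icc x₁ ((1 + ε / 8) * x₁), -g x₁ ≤ -g x :=
    fun x hx => neg_le_neg (hsol.antitone hF ha hx.1)
  have hblowup := mul_sub_lt_inv_of_mul_sq_le_deriv (u := fun y => -g y) (k := ε * κ / 4)
    (by nlinarith) (fun x hx => hu₁pos.trans_le (hmono x hx))
    (fun x _ => (hsol.differentiable x).hasDerivAt.neg) fun x hx => calc
      ε * κ / 4 * (-g x) ^ 2 = ε / 4 * (κ * (-g x) ^ 2) := by ring
      _ ≤ ε / 4 * F (-g x) := by gcongr; exact hR _ (hu₁R.trans (hmono x hx))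
      _ ≤ -deriv g x :=
        hsol.mul_map_neg_le_neg_deriv hF ha hε₀ hε₁ (by linarith) hx hu₁pos.le hblow
  have hinv : (-g x₁)⁻¹ ≤ ε ^ 2 * κ / 32 := by
    rw [inv_le_comm₀ hu₁pos (by positivity), inv_div]
    exact hu₁big
  have hlen : ε ^ 2 * κ / 32 ≤ ε * κ / 4 * ((1 + ε / 8) * x₁ - x₁) := by
    nlinarith [mul_pos (mul_pos hε₀ hε₀) hκ]
  linarith

theorem tendsto_neg_div_finv (hF : Assumption2 F) (hInv : IsInvOn F Finv) (ha : 0 < a)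
    (hsol : IsSignedSolution F a bF g) :
    Tendsto (fun x => -g x / Finv (a * x ^ 2)) atTop (𝓝 1) := by
  have hq : Tendsto (fun x : ℝ => a * x ^ 2) atTop atTop :=
    (tendsto_pow_atTop two_ne_zero).const_mul_atTop ha
  have hD := (hInv.tendsto_atTop hF.strictMonoOn).comp hq
  have hbF := hsol.bF_nonneg hF ha
  have hlarge : ∀ᶠ x in atTop, 0 ≤ x ∧ bF ≤ a * x ^ 2 ∧ 0 < Finv (a * x ^ 2) :=
    (eventually_ge_atTop 0).and ((hq.eventually_ge_atTop bF).and (hD.eventually_gt_atTop 0))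
  refine tendsto_order.2 ⟨fun l hl => ?_, fun m hm => ?_⟩
  · have hlow : Tendsto (fun x => 1 - Finv bF / Finv (a * x ^ 2)) atTop (𝓝 1) := by
      simpa using (tendsto_const_nhds.div_atTop hD).const_sub 1
    filter_upwards [hlarge, hlow.eventually (lt_mem_nhds hl)] with x ⟨hx, hbx, hDx⟩ hlx
    refine hlx.trans_le ?_
    rw [one_sub_div hDx.ne', div_le_div_iff_of_pos_right hDx]
    have hsub := hInv.map_add_le_add hF.strictMonoOn hF.convexOn_Ici hF.map_zero
      (sub_nonneg.2 hbx) hbF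
    rw [sub_add_cancel] at hsub
    linarith [hsol.finv_sub_le_neg hF hInv ha hx hbx]
  · obtain ⟨ε, hε₀, hε₁, hεm⟩ : ∃ ε, 0 < ε ∧ ε ≤ 1 ∧ 1 + ε < m :=
      ⟨min 1 ((m - 1) / 2), lt_min one_pos (by linarith), min_le_left _ _,
        by linarith [min_le_right 1 ((m - 1) / 2)]⟩
    filter_upwards [hlarge, hsol.eventually_map_neg_le hF hInv ha hε₀ hε₁]
      with x ⟨hx, _, hDx⟩ hup
    have hax : 0 ≤ a * x ^ 2 := by positivity
    have hu : -g x ≤ Finv ((1 + ε) * (a * x ^ 2)) :=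
      hInv.le_of_apply_le hF.strictMonoOn (mul_nonneg (by linarith) hax)
        (hsol.neg_nonneg_of_nonneg hx) hup
    have hscale := hInv.map_mul_le_mul hF.strictMonoOn hF.convexOn_Ici hF.map_zero
      (by linarith : 1 ≤ 1 + ε) hax
    calc -g x / Finv (a * x ^ 2) ≤ 1 + ε := by rw [div_le_iff₀ hDx]; linarith
      _ < m := hεm

end IsSignedSolution

/-- Lemma A.5 (properties): the unique solution `g` on `ℝ` of `g' = a·x² − b_F − F(g)` with
`x·g(x) ≤ 0` is odd, decreasing, and satisfies `g(x)/F⁻¹(a·x²) → 1` as `x → −∞` and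
`g(x)/F⁻¹(a·x²) → −1` as `x → +∞`. -/
theorem stmt12 (F Finv : ℝ → ℝ) (hF : Assumption2 F) (hInv : IsInvOn F Finv)
    (a bF : ℝ) (ha : 0 < a) (g : ℝ → ℝ)
    (hg : Differentiable ℝ g)
    (hode : ∀ x : ℝ, deriv g x = a * x ^ 2 - bF - F (g x))
    (hsign : ∀ x : ℝ, x * g x ≤ 0) :
    (∀ x : ℝ, g (-x) = -g x) ∧ Antitone g ∧
    Filter.Tendsto (fun x => g x / Finv (a * x ^ 2)) Filter.atBot (nhds 1) ∧
    Filter.Tendsto (fun x => g x / Finv (a * x ^ 2)) Filter.atTop (nhds (-1)) := by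
  have hsol : IsSignedSolution F a bF g := ⟨hg, hode, hsign⟩
  have hTop : Tendsto (fun x => g x / Finv (a * x ^ 2)) atTop (𝓝 (-1)) := by
    simpa [neg_div] using (hsol.tendsto_neg_div_finv hF hInv ha).neg
  refine ⟨hsol.odd hF, hsol.antitone hF ha, ?_, hTop⟩
  simpa [Function.comp_def, hsol.odd hF, neg_div] using
    (hTop.comp tendsto_neg_atBot_atTop).neg
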